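/- arXiv:2006.04933 — 2 statements merged into one kernel-verified Lean document; each statement's English description precedes it below -/
import Mathlib

section
/- Let S be a nonempty finite set, let y : S → ℝ with 0 ≤ y_e ≤ 1 for all e, let g(F) = ∑_{e∈F} (1 − y_e) + ∑_{e∈S∖F} y_e, and let F₀ = {e ∈ S : y_e > 1/2}. Then the minimum of g(F) over all subsets F ⊆ S with |F| odd equals ∑_{e∈S} min(y_e, 1 − y_e) if |F₀| is odd, and equals ∑_{e∈S} min(y_e, 1 − y_e) + min_{e∈S} |1 − 2y_e| if |F₀| is even. -/
/-!
Write `F₀` for the elements with `y e > 1/2`. Each element contributes `min (y e) (1 - y e)`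
to `g F` when `F` agrees with `F₀` on it, and `|1 - 2 y e|` more otherwise, so
`g F = ∑ min (y e) (1 - y e) + ∑_{e ∈ F ∆ F₀} |1 - 2 y e|`. If `|F₀|` is odd, `F₀` itself is
optimal. If `|F₀|` is even, an odd `F` differs from `F₀`, so the second sum is at least the
smallest `|1 - 2 y e|`, and flipping the membership of a minimizing element attains it.
-/

open Finset
open scoped symmDiff

theorem ite_eq_min_add_ite_abs (p : Prop) [Decidable p] (t : ℝ) :
    (if p then 1 - t else t) = min t (1 - t) + if (p ↔ 1 / 2 < t) then 0 else |1 - 2 * t| := by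
  by_cases hp : p <;> by_cases ht : 1 / 2 < t
  · rw [if_pos hp, if_pos (iff_of_true hp ht), min_eq_right (by linarith), add_zero]
  · rw [if_pos hp, if_neg (by tauto), min_eq_left (by linarith), abs_of_nonneg (by linarith)]
    ring
  · rw [if_neg hp, if_neg (by tauto), min_eq_right (by linarith), abs_of_neg (by linarith)]
    ring
  · rw [if_neg hp, if_pos (iff_of_false hp ht), min_eq_left (by linarith), add_zero]

namespace Finset

variable {α : Type*} [DecidableEq α]

theorem card_symmDiff_add_two_mul_card_inter (s t : Finset α) :
    #(s ∆ t) + 2 * #(s ∩ t) = #s + #t := by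
  rw [Finset.symmDiff_def, card_union_of_disjoint disjoint_sdiff_sdiff,
    ← card_sdiff_add_card_inter s t, ← card_sdiff_add_card_inter t s, inter_comm t s]
  ring

theorem even_card_symmDiff_iff (s t : Finset α) :
    Even #(s ∆ t) ↔ (Even #s ↔ Even #t) := by
  rw [← Nat.even_add, ← card_symmDiff_add_two_mul_card_inter]
  simp [Nat.even_add]

end Finset

section ParityLhs

variable {α : Type*} [DecidableEq α] (S : Finset α) (y : α → ℝ)

def parityLhs (F : Finset α) : ℝ :=
  ∑ e ∈ F, (1 - y e) + ∑ e ∈ S \ F, y e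

variable {S} {F : Finset α}

theorem parityLhs_eq_sum_ite (hF : F ⊆ S) :
    parityLhs S y F = ∑ e ∈ S, if e ∈ F then 1 - y e else y e := by
  rw [parityLhs, sum_ite, filter_mem_eq_inter, inter_eq_right.2 hF, filter_notMem_eq_sdiff]

theorem symmDiff_filter_half_lt_eq_filter (hF : F ⊆ S) :
    F ∆ S.filter (fun e => 1 / 2 < y e) = S.filter (fun e => ¬(e ∈ F ↔ 1 / 2 < y e)) := by
  ext e
  simp only [mem_symmDiff, mem_filter]
  have := @hF e
  tauto

theorem parityLhs_eq_sum_min_add_sum_symmDiff (hF : F ⊆ S) :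
    parityLhs S y F = ∑ e ∈ S, min (y e) (1 - y e) +
      ∑ e ∈ F ∆ S.filter (fun e => 1 / 2 < y e), |1 - 2 * y e| := by
  simp_rw [parityLhs_eq_sum_ite y hF, ite_eq_min_add_ite_abs, sum_add_distrib,
    symmDiff_filter_half_lt_eq_filter y hF, sum_filter, ite_not]

end ParityLhs

theorem parity_lhs_min_over_odd_subsets_general {α : Type*} [DecidableEq α]
    (S : Finset α) (hS : S.Nonempty) (y : α → ℝ)
    (g : Finset α → ℝ)
    (hg : ∀ F, g F = ∑ e ∈ F, (1 - y e) + ∑ e ∈ S \ F, y e)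
    (F₀ : Finset α) (hF₀ : F₀ = S.filter (fun e => 1 / 2 < y e)) :
    IsLeast {x : ℝ | ∃ F ⊆ S, Odd F.card ∧ g F = x}
      (if Odd F₀.card then ∑ e ∈ S, min (y e) (1 - y e)
       else ∑ e ∈ S, min (y e) (1 - y e) + S.inf' hS (fun e => |1 - 2 * y e|)) := by
  have hgF (F : Finset α) (hF : F ⊆ S) :
      g F = ∑ e ∈ S, min (y e) (1 - y e) + ∑ e ∈ F ∆ F₀, |1 - 2 * y e| :=
    hF₀ ▸ (hg F).trans (parityLhs_eq_sum_min_add_sum_symmDiff y hF)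
  have hF₀S : F₀ ⊆ S := hF₀ ▸ filter_subset _ S
  refine ⟨?_, ?_⟩
  · split_ifs with hF₀odd
    · exact ⟨F₀, hF₀S, hF₀odd, by rw [hgF F₀ hF₀S, symmDiff_self, bot_eq_empty, sum_empty,
        add_zero]⟩
    · obtain ⟨e₀, he₀, hmin⟩ := exists_mem_eq_inf' hS fun e => |1 - 2 * y e|
      have hsub : F₀ ∆ {e₀} ⊆ S :=
        symmDiff_subset_union.trans (union_subset hF₀S (singleton_subset_iff.2 he₀))
      refine ⟨F₀ ∆ {e₀}, hsub, ?_, ?_⟩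
      · rw [← Nat.not_even_iff_odd, even_card_symmDiff_iff, card_singleton]
        simpa using hF₀odd
      · rw [hgF _ hsub, symmDiff_symmDiff_self', sum_singleton, hmin]
  · rintro _ ⟨F, hFS, hFodd, rfl⟩
    rw [hgF F hFS]
    split_ifs with hF₀odd
    · exact le_add_of_nonneg_right (sum_nonneg fun e _ => abs_nonneg _)
    · obtain ⟨e, he⟩ : (F ∆ F₀).Nonempty := symmDiff_nonempty.2 fun h => hF₀odd (h ▸ hFodd)
      gcongr
      calc S.inf' hS (fun e => |1 - 2 * y e|)
          ≤ |1 - 2 * y e| := inf'_le _ (symmDiff_subset_union.trans (union_subset hFS hF₀S) he)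
        _ ≤ ∑ e ∈ F ∆ F₀, |1 - 2 * y e| := single_le_sum (f := fun e => |1 - 2 * y e|)
          (fun e _ => abs_nonneg _) he

/-- For a nonempty finite `S` and `y : S → [0,1]`, the minimum of
`g F = ∑ e in F, (1 - y e) + ∑ e in S \ F, y e` over all odd-cardinality `F ⊆ S`
equals `∑ e in S, min (y e) (1 - y e)` if `F₀ = {e ∈ S : y e > 1/2}` has odd
cardinality, and equals `∑ e in S, min (y e) (1 - y e) + min_{e ∈ S} |1 - 2 y e|`
if `F₀` has even cardinality. -/
theorem parity_lhs_min_over_odd_subsets {α : Type*} [DecidableEq α]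
    (S : Finset α) (hS : S.Nonempty) (y : α → ℝ)
    (hy : ∀ e ∈ S, 0 ≤ y e ∧ y e ≤ 1)
    (g : Finset α → ℝ)
    (hg : ∀ F, g F = ∑ e ∈ F, (1 - y e) + ∑ e ∈ S \ F, y e)
    (F₀ : Finset α) (hF₀ : F₀ = S.filter (fun e => 1 / 2 < y e)) :
    IsLeast {x : ℝ | ∃ F ⊆ S, Odd F.card ∧ g F = x}
      (if Odd F₀.card then ∑ e ∈ S, min (y e) (1 - y e)
       else ∑ e ∈ S, min (y e) (1 - y e) + S.inf' hS (fun e => |1 - 2 * y e|)) :=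
  parity_lhs_min_over_odd_subsets_general S hS y g hg F₀ hF₀
end

section
/- Let G = (V, E) be a finite connected graph with |V| ≥ 3, let x : E → ℕ be a GTSP tour on G, i.e., for every vertex v the degree ∑_{e∈δ(v)} x_e is even and positive, and the subgraph of edges with x_e > 0 is connected and spans V. Assume moreover x_e ≤ 2 for all e ∈ E. For an edge e = {i,j}, set z_e = 1 if x_e = 2 and z_e = 0 otherwise. Then ∑_{e'∈δ(i)} x_{e'} + ∑_{e'∈δ(j)} x_{e'} − 2 z_e ≥ 4. -/
/-- A GTSP tour on a finite graph `G`: a natural-number edge-multiplicity vector,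
supported on the edges of `G`, with even positive degree at every vertex, whose
support is connected and spans all the vertices. -/
def IsGTSPTour {V : Type*} [Fintype V] [DecidableEq V]
    (G : SimpleGraph V) [DecidableRel G.Adj] (x : Sym2 V → ℕ) : Prop :=
  (∀ e, e ∉ G.edgeSet → x e = 0) ∧
    (∀ v : V, Even (∑ e ∈ G.incidenceFinset v, x e) ∧
      0 < ∑ e ∈ G.incidenceFinset v, x e) ∧
    (SimpleGraph.fromEdgeSet {e : Sym2 V | e ∈ G.edgeSet ∧ 0 < x e}).Connected

theorem Finset.eq_zero_of_sum_le_of_ne {ι : Type*} {s : Finset ι} {f : ι → ℕ} {a b : ι}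
    (ha : a ∈ s) (hsum : ∑ c ∈ s, f c ≤ f a) (hb : b ∈ s) (hba : b ≠ a) : f b = 0 := by
  classical
  have hsplit := Finset.add_sum_erase s f ha
  have hrest : ∑ c ∈ s.erase a, f c = 0 := by omega
  exact Finset.sum_eq_zero_iff.mp hrest b (Finset.mem_erase.mpr ⟨hba, hb⟩)

namespace SimpleGraph

variable {V : Type*} {G : SimpleGraph V}

theorem Walk.mem_of_adj_closed {S : Set V} (hS : ∀ u v, G.Adj u v → u ∈ S → v ∈ S) :
    ∀ {u v : V}, G.Walk u v → u ∈ S → v ∈ S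
  | _, _, .nil => id
  | _, _, .cons h p => fun hu => p.mem_of_adj_closed hS (hS _ _ h hu)

theorem Preconnected.eq_univ_of_adj_closed (hG : G.Preconnected) {S : Set V} {u : V}
    (hS : ∀ u v, G.Adj u v → u ∈ S → v ∈ S) (hu : u ∈ S) : S = Set.univ :=
  Set.eq_univ_of_forall fun v => (hG u v).some.mem_of_adj_closed hS hu

def supportGraph (G : SimpleGraph V) (x : Sym2 V → ℕ) : SimpleGraph V :=
  fromEdgeSet {e | e ∈ G.edgeSet ∧ 0 < x e}

variable [Fintype V] [DecidableEq V] [DecidableRel G.Adj] {x : Sym2 V → ℕ}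

theorem edge_eq_of_incidence_sum_le {u v : V} {e : Sym2 V}
    (he : e ∈ G.incidenceFinset u) (hsum : ∑ e' ∈ G.incidenceFinset u, x e' ≤ x e)
    (huv : G.Adj u v) (hpos : 0 < x s(u, v)) : s(u, v) = e := by
  by_contra hne
  have hmem : s(u, v) ∈ G.incidenceFinset u :=
    (G.mem_incidenceFinset _ _).mpr ⟨huv, Sym2.mem_mk_left u v⟩
  exact hpos.ne' (Finset.eq_zero_of_sum_le_of_ne he hsum hmem hne)

theorem supportGraph_adj_closed_pair {i j : V} (hij : G.Adj i j)
    (hi : ∑ e ∈ G.incidenceFinset i, x e ≤ x s(i, j))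
    (hj : ∑ e ∈ G.incidenceFinset j, x e ≤ x s(i, j)) :
    ∀ u v, (supportGraph G x).Adj u v → u ∈ ({i, j} : Set V) → v ∈ ({i, j} : Set V) := by
  intro u v huv hu
  obtain ⟨⟨hadj, hpos⟩, -⟩ := (fromEdgeSet_adj _).mp huv
  have hedge : s(u, v) = s(i, j) := by
    rcases hu with rfl | rfl
    · exact edge_eq_of_incidence_sum_le
        ((G.mem_incidenceFinset _ _).mpr ⟨hij, Sym2.mem_mk_left _ _⟩) hi hadj hpos
    · exact edge_eq_of_incidence_sum_le
        ((G.mem_incidenceFinset _ _).mpr ⟨hij, Sym2.mem_mk_right _ _⟩) hj hadj hpos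
  simpa using (hedge ▸ Sym2.mem_mk_right u v : v ∈ s(i, j))

end SimpleGraph

open SimpleGraph

namespace IsGTSPTour

variable {V : Type*} [Fintype V] [DecidableEq V] {G : SimpleGraph V} [DecidableRel G.Adj]
  {x : Sym2 V → ℕ}

theorem two_le_degree (hx : IsGTSPTour G x) (v : V) :
    2 ≤ ∑ e ∈ G.incidenceFinset v, x e := by
  obtain ⟨⟨k, hk⟩, hpos⟩ := hx.2.1 v
  omega

theorem degree_le_two_of_add_lt_six (hx : IsGTSPTour G x) {u v : V}
    (h : (∑ e ∈ G.incidenceFinset u, x e) + ∑ e ∈ G.incidenceFinset v, x e < 6) :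
    ∑ e ∈ G.incidenceFinset u, x e ≤ 2 := by
  obtain ⟨k, hk⟩ := (hx.2.1 u).1
  have := hx.two_le_degree v
  omega

/-- If `x s(i, j) = 2` and both `i` and `j` had degree `2`, the edge `ij` would be the only
support edge leaving `{i, j}`, so by connectivity of the support `V = {i, j}`. -/
theorem six_le_degree_add_degree (hx : IsGTSPTour G x) (hV : 3 ≤ Fintype.card V)
    {i j : V} (hij : G.Adj i j) (hx2 : x s(i, j) = 2) :
    6 ≤ (∑ e ∈ G.incidenceFinset i, x e) + ∑ e ∈ G.incidenceFinset j, x e := by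
  by_contra! hlt
  have hi := hx2 ▸ hx.degree_le_two_of_add_lt_six hlt
  have hj := hx2 ▸ hx.degree_le_two_of_add_lt_six ((add_comm _ _).trans_lt hlt)
  have huniv : ({i, j} : Set V) = Set.univ :=
    hx.2.2.preconnected.eq_univ_of_adj_closed (supportGraph_adj_closed_pair hij hi hj)
      (Set.mem_insert i {j})
  have hcard : Fintype.card V ≤ 2 := by
    rw [← Nat.card_eq_fintype_card, ← Set.ncard_univ, ← huniv]
    exact (Set.ncard_insert_le i {j}).trans (by simp)
  omega

end IsGTSPTour

theorem half_z_path_inequality_valid_general {V : Type*} [Fintype V] [DecidableEq V]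
    (G : SimpleGraph V) [DecidableRel G.Adj]
    (hV : 3 ≤ Fintype.card V)
    (x : Sym2 V → ℕ) (hx : IsGTSPTour G x)
    (i j : V) (hij : G.Adj i j)
    (z : ℤ) (hz : z = if x s(i, j) = 2 then 1 else 0) :
    (4 : ℤ) ≤ (∑ e ∈ G.incidenceFinset i, (x e : ℤ)) +
        (∑ e ∈ G.incidenceFinset j, (x e : ℤ)) - 2 * z := by
  have hi := hx.two_le_degree i
  have hj := hx.two_le_degree j
  simp only [← Nat.cast_sum]
  subst hz
  split_ifs with hx2
  · have := hx.six_le_degree_add_degree hV hij hx2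
    omega
  · omega

/-- validity of inequality (5): for a GTSP tour `x` with `x e ≤ 2` on a
connected graph with at least 3 vertices, and an edge `e = {i,j}` with
`z_e = [x e = 2]`, we have `x(δ(i)) + x(δ(j)) - 2 z_e ≥ 4`. -/
theorem half_z_path_inequality_valid {V : Type*} [Fintype V] [DecidableEq V]
    (G : SimpleGraph V) [DecidableRel G.Adj] (hG : G.Connected)
    (hV : 3 ≤ Fintype.card V)
    (x : Sym2 V → ℕ) (hx : IsGTSPTour G x) (hx2 : ∀ e, x e ≤ 2)
    (i j : V) (hij : G.Adj i j)
    (z : ℤ) (hz : z = if x s(i, j) = 2 then 1 else 0) :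
    (4 : ℤ) ≤ (∑ e ∈ G.incidenceFinset i, (x e : ℤ)) +
        (∑ e ∈ G.incidenceFinset j, (x e : ℤ)) - 2 * z :=
  half_z_path_inequality_valid_general G hV x hx i j hij z hz
end
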